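/- If no two colluding agents are adjacent in G (d(x,y) ≥ 2 for all distinct x,y ∈ C), then the broadcast β(x,t) = ρ*(x,t) for all x ∈ C is admissible. -/

import Mathlib

open SimpleGraph

namespace Intercept

variable {V : Type*}

/-- The perceived-distance vectors after `s` rounds of the synchronization protocol.
Colluding agents (members of `C`) always broadcast `β`; honest agents start with
`0`/`∞` and update by the distance-vector rule. -/
noncomputable def perceived [Fintype V] [DecidableEq V] (G : SimpleGraph V)
    (C : Finset V) (β : V → V → ℕ∞) : ℕ → V → V → ℕ∞
  | 0 => fun i j => if i ∈ C then β i j else if i = j then 0 else ⊤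
  | s + 1 => fun i j =>
      if i ∈ C then β i j
      else min (perceived G C β s i j)
        (1 + ⨅ k ∈ G.neighborSet i, perceived G C β s k j)

/-- The stationary perceived distances `ρ = ρ^n`. -/
noncomputable def rho [Fintype V] [DecidableEq V] (G : SimpleGraph V)
    (C : Finset V) (β : V → V → ℕ∞) : V → V → ℕ∞ :=
  perceived G C β (Fintype.card V)

/-- `k ∈ b(i,t)`:  `k` is a neighbor of `i` minimizing the (stationary) perceived
distance `ρ(·,t)` among all neighbors of `i`; only defined (satisfiable) for `i ≠ t`. -/
def inForwardSet (G : SimpleGraph V) (ρ : V → V → ℕ∞) (i t k : V) : Prop :=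
  i ≠ t ∧ G.Adj i k ∧ ∀ k', G.Adj i k' → ρ k t ≤ ρ k' t

/-- A corresponding path from `s` to `t`: a walk in `G` such that every honest vertex
forwards to a member of its forwarding set `b(·,t)`. -/
def IsCorrPath [Fintype V] [DecidableEq V] (G : SimpleGraph V) (C : Finset V)
    (β : V → V → ℕ∞) (s t : V) (ℓ : ℕ) (v : ℕ → V) : Prop :=
  v 0 = s ∧ v ℓ = t ∧ (∀ i < ℓ, G.Adj (v i) (v (i + 1))) ∧
    ∀ i < ℓ, v i ∉ C → inForwardSet G (rho G C β) (v i) t (v (i + 1))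

/-- A broadcast is admissible if between every ordered pair of distinct vertices
there is a corresponding path. -/
def Admissible [Fintype V] [DecidableEq V] (G : SimpleGraph V) (C : Finset V)
    (β : V → V → ℕ∞) : Prop :=
  ∀ s t : V, s ≠ t → ∃ ℓ v, IsCorrPath G C β s t ℓ v

/-- The pair `(s,t)` is captured if every corresponding path from `s` to `t`
contains a colluding vertex. -/
def Captured [Fintype V] [DecidableEq V] (G : SimpleGraph V) (C : Finset V)
    (β : V → V → ℕ∞) (s t : V) : Prop :=
  ∀ ℓ v, IsCorrPath G C β s t ℓ v → ∃ i ≤ ℓ, v i ∈ C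

/-- `N(C,β)`: the number of captured ordered pairs of distinct vertices. -/
noncomputable def numCaptured [Fintype V] [DecidableEq V] (G : SimpleGraph V)
    (C : Finset V) (β : V → V → ℕ∞) : ℕ :=
  Set.ncard {p : V × V | p.1 ≠ p.2 ∧ Captured G C β p.1 p.2}

/-- The `j`-th colluding distance `d_j(x,y)`: the least total length of a sequence of
`j` distinct colluding vertices starting at `x` and ending at `y`, measured by summing
the graph distances of consecutive members (`⊤` if no such sequence exists). -/
noncomputable def collDist (G : SimpleGraph V) (C : Finset V) (j : ℕ) (x y : V) : ℕ∞ :=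
  ⨅ (σ : ℕ → V) (_ : σ 0 = x ∧ σ (j - 1) = y ∧ (∀ i < j, σ i ∈ C) ∧
      ∀ a < j, ∀ b < j, σ a = σ b → a = b),
    ∑ i ∈ Finset.range (j - 1), (G.dist (σ i) (σ (i + 1)) : ℕ∞)

/-- `ρ'(x,t) = max (d(x,t) - 2) 1`. -/
noncomputable def rhoPrime (G : SimpleGraph V) (x t : V) : ℕ∞ :=
  max ((G.dist x t : ℕ∞) - 2) 1

/-- `ρ''(x,t)`: the minimum over colluders `y` and `1 ≤ j ≤ |C|` of
`d_j(x,y) - 2(j-1) + ρ'(y,t)`. -/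
noncomputable def rhoPrime2 (G : SimpleGraph V) (C : Finset V) (x t : V) : ℕ∞ :=
  ⨅ y ∈ C, ⨅ j ∈ Finset.Icc 1 C.card,
    (collDist G C j x y - ((2 * (j - 1) : ℕ) : ℕ∞) + rhoPrime G y t)

/-- The optimal separated broadcast `ρ*(x,t) = min (ρ'(x,t)) (ρ''(x,t))`,
with `ρ*(x,x) = 0`. -/
noncomputable def rhoStar [DecidableEq V] (G : SimpleGraph V) (C : Finset V)
    (x t : V) : ℕ∞ :=
  if x = t then 0 else min (rhoPrime G x t) (rhoPrime2 G C x t)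

/-- A colluder `x` is proper for target `t` if `ρ*(x,t) < ρ'(x,t)`. -/
def Proper [DecidableEq V] (G : SimpleGraph V) (C : Finset V) (x t : V) : Prop :=
  rhoStar G C x t < rhoPrime G x t

open scoped Classical in
/-- The forwarding number of `x` for `t`: the least `j ≥ 1` such that
`ρ*(x,t) = d_j(x,y) - 2(j-1) + ρ'(y,t)` for some colluder `y`, improper
vertices being assigned forwarding number `1`. -/
noncomputable def fwdNum [DecidableEq V] (G : SimpleGraph V) (C : Finset V)
    (x t : V) : ℕ :=
  if Proper G C x t then
    sInf {j : ℕ | 1 ≤ j ∧ ∃ y ∈ C, rhoStar G C x t =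
      collDist G C j x y - ((2 * (j - 1) : ℕ) : ℕ∞) + rhoPrime G y t}
  else 1

/-!
Fix the target `t` and write `ρ v` for the stationary perceived distance from `v` to `t`; it is
finite since `ρ v ≤ d(v,t)`. By induction on `r`, every vertex with `ρ v = r` has a
corresponding path: an honest vertex forwards to a neighbour with smaller `ρ`. It remains to rule
out a *stuck* colluder `z`, one with `ρ z = r` and no corresponding path. Its neighbours are
honest and cannot reach `t` either, so every vertex two steps away with `ρ ≤ r` is again a stuck
colluder. Looking two steps along a geodesic to `t` shows `ρ'(z,t) > r`, so `ρ*(z,t) = r` is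
realised by a chain `z = σ 0, σ 1, …` of colluders. On a geodesic from `z` to `σ 1`, the honest
agents relay `ρ*` of the first colluder they meet; this forces the vertex two steps out to be a
stuck colluder, namely `σ 1`, whose chain is one shorter. Descending, a chain of length one would
give `ρ*(z,t) = ρ'(z,t)`, which was excluded.
-/

open Finset

lemma exists_adj_dist_lt {G : SimpleGraph V} (hG : G.Connected) {v t : V} (hvt : v ≠ t) :
    ∃ u, G.Adj v u ∧ G.dist u t < G.dist v t := by
  obtain ⟨p, hp⟩ := hG.exists_walk_length_eq_dist v t
  cases p with
  | nil => exact absurd rfl hvt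
  | cons h q => exact ⟨_, h, (dist_le q).trans_lt (by simp [← hp])⟩

section CollusionChains

variable {G : SimpleGraph V} {C : Finset V} {t : V}

def IsCollChain (C : Finset V) (σ : ℕ → V) (j : ℕ) : Prop :=
  (∀ i < j, σ i ∈ C) ∧ ∀ a < j, ∀ b < j, σ a = σ b → a = b

/-- The term of `ρ''` contributed by the chain `σ 0, …, σ (j - 1)`, written link by link: each
link costs `d - 2`, which between two distinct separated colluders is never truncated. -/
noncomputable def chainCost (G : SimpleGraph V) (t : V) (σ : ℕ → V) (j : ℕ) : ℕ :=
  ∑ i ∈ range (j - 1), (G.dist (σ i) (σ (i + 1)) - 2) + max (G.dist (σ (j - 1)) t - 2) 1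

lemma IsCollChain.card_le {σ : ℕ → V} {j : ℕ} (h : IsCollChain C σ j) : j ≤ C.card := by
  simpa using card_le_card_of_injOn σ (s := range j) (fun i hi ↦ h.1 i (by simpa using hi))
    fun a ha b hb hab ↦ h.2 a (by simpa using ha) b (by simpa using hb) hab

lemma IsCollChain.drop {σ : ℕ → V} {j : ℕ} (h : IsCollChain C σ j) (a : ℕ) :
    IsCollChain C (fun b ↦ σ (b + a)) (j - a) :=
  ⟨fun i hi ↦ h.1 _ (by omega), fun b hb b' hb' hbb ↦ by
    have := h.2 _ (by omega) _ (by omega) hbb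
    omega⟩

lemma IsCollChain.cons {σ : ℕ → V} {j : ℕ} {z : V} (h : IsCollChain C σ j) (hz : z ∈ C)
    (hfresh : ∀ a < j, σ a ≠ z) : IsCollChain C (fun | 0 => z | b + 1 => σ b) (j + 1) := by
  refine ⟨fun | 0, _ => hz | i + 1, hi => h.1 i (by omega), ?_⟩
  rintro (_ | a) ha (_ | b) hb hab
  · rfl
  · exact absurd hab.symm (hfresh b (by omega))
  · exact absurd hab (hfresh a (by omega))
  · rw [h.2 a (by omega) b (by omega) hab]

lemma chainCost_succ (σ : ℕ → V) {j : ℕ} (hj : 1 ≤ j) :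
    chainCost G t σ (j + 1) =
      (G.dist (σ 0) (σ 1) - 2) + chainCost G t (fun b ↦ σ (b + 1)) j := by
  obtain ⟨j, rfl⟩ : ∃ j', j = j' + 1 := ⟨j - 1, by omega⟩
  simp only [chainCost, Nat.add_sub_cancel, sum_range_succ']
  ring

lemma chainCost_drop_le (σ : ℕ → V) {a j : ℕ} (ha : a < j) :
    chainCost G t (fun b ↦ σ (b + a)) (j - a) ≤ chainCost G t σ j := by
  dsimp only [chainCost]
  rw [show j - a - 1 + a = j - 1 by omega, show j - 1 = a + (j - a - 1) by omega,
    sum_range_add]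
  gcongr ?_ + _
  refine le_add_left (sum_le_sum fun i _ ↦ ?_)
  rw [add_comm a, add_right_comm]

lemma rhoPrime_eq_coe (x t : V) :
    rhoPrime G x t = ((max (G.dist x t - 2) 1 : ℕ) : ℕ∞) := by
  rw [rhoPrime, Nat.mono_cast.map_max, ENat.natCast_sub, Nat.cast_one, Nat.cast_ofNat]

lemma rhoPrime2_le_chainCost {σ : ℕ → V} {j : ℕ} (hσ : IsCollChain C σ j) (hj : 1 ≤ j) :
    rhoPrime2 G C (σ 0) t ≤ chainCost G t σ j := by
  set S := ∑ i ∈ range (j - 1), G.dist (σ i) (σ (i + 1))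
  have hS : S ≤ ∑ i ∈ range (j - 1), (G.dist (σ i) (σ (i + 1)) - 2) + 2 * (j - 1) := by
    calc S ≤ ∑ i ∈ range (j - 1), (G.dist (σ i) (σ (i + 1)) - 2 + 2) :=
          sum_le_sum fun i _ ↦ le_tsub_add
      _ = _ := by rw [sum_add_distrib, sum_const, card_range, smul_eq_mul, mul_comm]
  calc rhoPrime2 G C (σ 0) t
      ≤ collDist G C j (σ 0) (σ (j - 1)) - ((2 * (j - 1) : ℕ) : ℕ∞)
          + rhoPrime G (σ (j - 1)) t :=
        (iInf₂_le _ (hσ.1 _ (by omega))).trans (iInf₂_le j (mem_Icc.2 ⟨hj, hσ.card_le⟩))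
    _ ≤ (S : ℕ∞) - ((2 * (j - 1) : ℕ) : ℕ∞) + rhoPrime G (σ (j - 1)) t := by
        gcongr
        exact (iInf₂_le σ ⟨rfl, rfl, hσ.1, hσ.2⟩).trans (by simp [S])
    _ ≤ chainCost G t σ j := by
        rw [rhoPrime_eq_coe, ← ENat.natCast_sub, ← Nat.cast_add, chainCost, Nat.cast_le]
        omega

/-- A chain can be extended by a colluder in front of it, or cut down to start there. -/
lemma rhoPrime2_le_dist_sub_two_add_chainCost {σ : ℕ → V} {j : ℕ} (hσ : IsCollChain C σ j)
    (hj : 1 ≤ j) {w : V} (hw : w ∈ C) :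
    rhoPrime2 G C w t ≤ (G.dist w (σ 0) - 2 + chainCost G t σ j : ℕ) := by
  by_cases hmem : ∃ a < j, σ a = w
  · obtain ⟨a, ha, rfl⟩ := hmem
    calc rhoPrime2 G C (σ a) t ≤ chainCost G t (fun b ↦ σ (b + a)) (j - a) := by
          simpa using rhoPrime2_le_chainCost (hσ.drop a) (by omega)
      _ ≤ _ := by exact_mod_cast (chainCost_drop_le σ ha).trans le_add_self
  · push Not at hmem
    have h := rhoPrime2_le_chainCost (G := G) (t := t) (hσ.cons hw hmem) (by omega)
    rwa [chainCost_succ _ hj] at h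

lemma two_le_dist_of_mem (hG : G.Connected) (hsep : ∀ x ∈ C, ∀ y ∈ C, ¬G.Adj x y) {x y : V}
    (hx : x ∈ C) (hy : y ∈ C) (hxy : x ≠ y) : 2 ≤ G.dist x y :=
  hG.one_lt_dist_of_ne_of_not_adj hxy (hsep x hx y hy)

lemma exists_chainCost_le_rhoPrime2 (hG : G.Connected)
    (hsep : ∀ x ∈ C, ∀ y ∈ C, ¬G.Adj x y) {x : V} (h : rhoPrime2 G C x t ≠ ⊤) :
    ∃ σ j, σ 0 = x ∧ 1 ≤ j ∧ IsCollChain C σ j ∧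
      (chainCost G t σ j : ℕ∞) ≤ rhoPrime2 G C x t := by
  have h₁ := (ENat.lt_add_one_iff h).2 le_rfl
  nth_rewrite 1 [rhoPrime2] at h₁
  simp only [iInf_lt_iff, exists_prop, mem_Icc] at h₁
  obtain ⟨y, -, j, ⟨hj, -⟩, hlt⟩ := h₁
  have hfin : collDist G C j x y ≠ ⊤ := by
    rintro htop
    rw [htop, ENat.top_sub_natCast, top_add] at hlt
    exact not_top_lt hlt
  have h₂ := (ENat.lt_add_one_iff hfin).2 le_rfl
  nth_rewrite 1 [collDist] at h₂
  simp only [iInf_lt_iff, exists_prop] at h₂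
  obtain ⟨σ, ⟨rfl, rfl, hσC, hσinj⟩, hσ⟩ := h₂
  refine ⟨σ, j, rfl, hj, ⟨hσC, hσinj⟩, ?_⟩
  have hlinks : ∀ i ∈ range (j - 1), 2 ≤ G.dist (σ i) (σ (i + 1)) := fun i hi ↦ by
    have hi := mem_range.1 hi
    exact two_le_dist_of_mem hG hsep (hσC i (by omega)) (hσC (i + 1) (by omega))
      fun h ↦ by have := hσinj i (by omega) (i + 1) (by omega) h; omega
  have hcost : (chainCost G t σ j : ℕ∞) =
      ((∑ i ∈ range (j - 1), G.dist (σ i) (σ (i + 1)) : ℕ) : ℕ∞)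
        - ((2 * (j - 1) : ℕ) : ℕ∞) + rhoPrime G (σ (j - 1)) t := by
    rw [chainCost, sum_tsub_distrib _ hlinks, sum_const, card_range, smul_eq_mul, mul_comm,
      rhoPrime_eq_coe, ← ENat.natCast_sub, ← Nat.cast_add]
  rw [← ENat.lt_add_one_iff h, hcost]
  refine lt_of_le_of_lt ?_ hlt
  gcongr
  simpa using (ENat.lt_add_one_iff hfin).1 hσ

end CollusionChains

section RhoStar

variable [DecidableEq V] {G : SimpleGraph V} {C : Finset V} {t : V}

lemma rhoStar_le_rhoPrime {x : V} (hxt : x ≠ t) : rhoStar G C x t ≤ rhoPrime G x t := by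
  rw [rhoStar, if_neg hxt]
  exact min_le_left _ _

lemma rhoStar_le_rhoPrime2 (x t : V) : rhoStar G C x t ≤ rhoPrime2 G C x t := by
  unfold rhoStar
  split_ifs
  exacts [bot_le, min_le_right _ _]

lemma rhoStar_le_dist (hG : G.Connected) (x t : V) : rhoStar G C x t ≤ G.dist x t := by
  obtain rfl | hxt := eq_or_ne x t
  · simp [rhoStar]
  · have := hG.pos_dist_of_ne hxt
    refine (rhoStar_le_rhoPrime hxt).trans ?_
    rw [rhoPrime_eq_coe]
    exact_mod_cast (by omega : max (G.dist x t - 2) 1 ≤ G.dist x t)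

end RhoStar

section Protocol

variable [Fintype V] [DecidableEq V] {G : SimpleGraph V} {C : Finset V} {β : V → V → ℕ∞}

lemma perceived_of_mem {x : V} (hx : x ∈ C) (s : ℕ) (j : V) :
    perceived G C β s x j = β x j := by
  cases s <;> simp [perceived, hx]

lemma perceived_succ_of_not_mem {i : V} (hi : i ∉ C) (s : ℕ) (j : V) :
    perceived G C β (s + 1) i j =
      min (perceived G C β s i j) (1 + ⨅ k ∈ G.neighborSet i, perceived G C β s k j) := by
  simp [perceived, hi]

lemma perceived_antitone (i j : V) : Antitone fun s ↦ perceived G C β s i j := by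
  refine antitone_nat_of_succ_le fun s ↦ ?_
  by_cases hi : i ∈ C
  · simp [perceived_of_mem hi]
  · exact (perceived_succ_of_not_mem hi s j).trans_le (min_le_left _ _)

lemma perceived_succ_le_one_add {i k : V} (hi : i ∉ C) (hik : G.Adj i k) (s : ℕ) (j : V) :
    perceived G C β (s + 1) i j ≤ 1 + perceived G C β s k j := by
  rw [perceived_succ_of_not_mem hi]
  exact min_le_of_right_le (add_le_add_right (iInf₂_le k ((G.mem_neighborSet i k).2 hik)) 1)

lemma one_add_iInf_le_perceived {i j : V} (hi : i ∉ C) (hij : i ≠ j) (s : ℕ) :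
    1 + ⨅ k ∈ G.neighborSet i, perceived G C β s k j ≤ perceived G C β s i j := by
  induction s with
  | zero => simp [perceived, hi, hij]
  | succ s ih =>
    have hmono : ⨅ k ∈ G.neighborSet i, perceived G C β (s + 1) k j ≤
        ⨅ k ∈ G.neighborSet i, perceived G C β s k j :=
      iInf₂_mono fun k _ ↦ perceived_antitone k j s.le_succ
    rw [perceived_succ_of_not_mem hi]
    exact le_min ((add_le_add_right hmono 1).trans ih) (add_le_add_right hmono 1)

lemma perceived_add_le {j : V} (L : ℕ) (q : ℕ → V) (hadj : ∀ i < L, G.Adj (q i) (q (i + 1)))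
    (hq : ∀ i < L, q i ∉ C) (s : ℕ) :
    perceived G C β (s + L) (q 0) j ≤ L + perceived G C β s (q L) j := by
  induction L generalizing q with
  | zero => simp
  | succ L ih =>
    calc perceived G C β (s + L + 1) (q 0) j
        ≤ 1 + perceived G C β (s + L) (q 1) j :=
          perceived_succ_le_one_add (hq 0 L.succ_pos) (hadj 0 L.succ_pos) _ _
      _ ≤ 1 + (L + perceived G C β s (q (L + 1)) j) := by
          gcongr
          exact ih (fun i ↦ q (i + 1)) (fun i hi ↦ hadj (i + 1) (by omega))
            (fun i hi ↦ hq (i + 1) (by omega))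
      _ = (L + 1 : ℕ) + perceived G C β s (q (L + 1)) j := by push_cast; ring

lemma perceived_le_dist (hG : G.Connected) {t : V} (hβ : ∀ x ∈ C, β x t ≤ G.dist x t) :
    ∀ (v : V) (s : ℕ), G.dist v t ≤ s → perceived G C β s v t ≤ G.dist v t := by
  intro v
  induction hd : G.dist v t using Nat.strong_induction_on generalizing v with
  | _ d ih =>
  intro s hs
  by_cases hv : v ∈ C
  · exact hd ▸ perceived_of_mem hv s t ▸ hβ v hv
  by_cases hvt : v = t
  · subst hvt
    have h0 : perceived G C β 0 v v = 0 := by simp [perceived, hv]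
    exact (perceived_antitone v v (Nat.zero_le s)).trans (h0.trans_le bot_le)
  obtain ⟨u, hvu, hu⟩ := exists_adj_dist_lt hG hvt
  obtain ⟨s, rfl⟩ : ∃ s', s = s' + 1 := ⟨s - 1, by omega⟩
  calc perceived G C β (s + 1) v t ≤ 1 + perceived G C β s u t :=
        perceived_succ_le_one_add hv hvu s t
    _ ≤ 1 + G.dist u t := by gcongr; exact ih _ (hd ▸ hu) u rfl s (by omega)
    _ ≤ d := by norm_cast; omega

lemma rho_of_mem {x : V} (hx : x ∈ C) (t : V) : rho G C β x t = β x t :=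
  perceived_of_mem hx _ t

lemma rho_le_dist (hG : G.Connected) {t : V} (hβ : ∀ x ∈ C, β x t ≤ G.dist x t) (v : V) :
    rho G C β v t ≤ G.dist v t := by
  obtain ⟨p, hp⟩ := hG.exists_walk_length_eq_dist v t
  exact perceived_le_dist hG hβ v _ (hp ▸ (p.isPath_of_length_eq_dist hp).length_lt.le)

lemma rho_le_add_of_honest {t : V} (L : ℕ) (q : ℕ → V)
    (hadj : ∀ i < L, G.Adj (q i) (q (i + 1))) (hq : ∀ i < L, q i ∉ C)
    (hL : L ≤ Fintype.card V) (hx : q L ∈ C) :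
    rho G C β (q 0) t ≤ L + β (q L) t := by
  have h := perceived_add_le (β := β) (j := t) L q hadj hq (Fintype.card V - L)
  rwa [Nat.sub_add_cancel hL, perceived_of_mem hx] at h

/-- The honest agents after the first step of a walk between two colluders relay the perceived
distance of the first colluder they meet. -/
lemma exists_rho_getVert_two_le (hsep : ∀ x ∈ C, ∀ y ∈ C, ¬G.Adj x y) {t z z' : V}
    (hz : z ∈ C) (hz' : z' ∈ C) (p : G.Walk z z') (hp : p.IsPath) (hm : 2 ≤ p.length) :
    ∃ i, 2 ≤ i ∧ i ≤ p.length ∧ p.getVert i ∈ C ∧ (p.getVert 2 ∈ C → i = 2) ∧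
      rho G C β (p.getVert 2) t ≤ (i - 2 : ℕ) + β (p.getVert i) t := by
  classical
  have hend : p.getVert p.length ∈ C := by rwa [p.getVert_length]
  have hex : ∃ i, 1 ≤ i ∧ p.getVert i ∈ C := ⟨p.length, by omega, hend⟩
  obtain ⟨hi₁, hiC⟩ := Nat.find_spec hex
  set i := Nat.find hex
  have him : i ≤ p.length := Nat.find_min' hex ⟨by omega, hend⟩
  have hadj₀ : G.Adj z (p.getVert 1) := by simpa using p.adj_getVert_succ (i := 0) (by omega)
  have hi₂ : 2 ≤ i := by
    by_contra
    exact hsep z hz _ (by rwa [show i = 1 by omega] at hiC) hadj₀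
  refine ⟨i, hi₂, him, hiC, fun h ↦ (Nat.find_min' hex ⟨by omega, h⟩).antisymm hi₂,
    ?_⟩
  have h := rho_le_add_of_honest (β := β) (t := t) (i - 2) (fun k ↦ p.getVert (k + 2))
    (fun k hk ↦ p.adj_getVert_succ (by omega))
    (fun k hk h ↦ Nat.find_min hex (show k + 2 < i by omega) ⟨by omega, h⟩)
    (by have := hp.length_lt; omega) (by rwa [Nat.sub_add_cancel hi₂])
  rwa [Nat.sub_add_cancel hi₂] at h

lemma exists_inForwardSet (hG : G.Connected) {i t : V} (hit : i ≠ t) :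
    ∃ k, inForwardSet G (rho G C β) i t k := by
  classical
  obtain ⟨u, hiu, -⟩ := exists_adj_dist_lt hG hit
  obtain ⟨k, hk, hmin⟩ := (G.neighborFinset i).exists_min_image (rho G C β · t)
    ⟨u, (G.mem_neighborFinset i u).2 hiu⟩
  exact ⟨k, hit, (G.mem_neighborFinset i k).1 hk,
    fun k' hk' ↦ hmin k' ((G.mem_neighborFinset i k').2 hk')⟩

lemma one_add_rho_le_of_inForwardSet {i t k : V} (hi : i ∉ C)
    (hk : inForwardSet G (rho G C β) i t k) : 1 + rho G C β k t ≤ rho G C β i t :=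
  (add_le_add_right (le_iInf₂ fun k' hk' ↦ hk.2.2 k' hk') 1).trans
    (one_add_iInf_le_perceived hi hk.1 _)

end Protocol

section CorrespondingPaths

variable [Fintype V] [DecidableEq V] {G : SimpleGraph V} {C : Finset V} {β : V → V → ℕ∞}
  {t : V}

def HasCorrPath (G : SimpleGraph V) (C : Finset V) (β : V → V → ℕ∞) (s t : V) : Prop :=
  ∃ ℓ v, IsCorrPath G C β s t ℓ v

lemma hasCorrPath_self (t : V) : HasCorrPath G C β t t :=
  ⟨0, fun _ ↦ t, rfl, rfl, by simp, by simp⟩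

lemma HasCorrPath.cons {s k : V} (h : HasCorrPath G C β k t) (hsk : G.Adj s k)
    (hfwd : s ∉ C → inForwardSet G (rho G C β) s t k) : HasCorrPath G C β s t := by
  obtain ⟨ℓ, v, hv0, hvℓ, hadj, hv⟩ := h
  refine ⟨ℓ + 1, fun | 0 => s | i + 1 => v i, rfl, hvℓ, ?_, ?_⟩
  · rintro (_ | i) hi
    · exact (hv0 ▸ hsk : G.Adj s (v 0))
    · exact hadj i (by omega)
  · rintro (_ | i) hi hiC
    · exact (hv0 ▸ hfwd hiC : inForwardSet G (rho G C β) s t (v 0))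
    · exact hv i (by omega) hiC

lemma hasCorrPath_of_not_mem (hG : G.Connected) {r : ℕ}
    (hbelow : ∀ w, rho G C β w t < r → HasCorrPath G C β w t) {i : V} (hi : i ∉ C)
    (hr : rho G C β i t ≤ r) : HasCorrPath G C β i t := by
  obtain rfl | hit := eq_or_ne i t
  · exact hasCorrPath_self i
  obtain ⟨k, hk⟩ := exists_inForwardSet hG hit
  have hle : rho G C β k t + 1 ≤ r := add_comm (rho G C β k t) 1 ▸
    (one_add_rho_le_of_inForwardSet hi hk).trans hr
  have hlt : rho G C β k t < r :=
    (ENat.add_one_le_iff fun htop ↦ by simp [htop] at hle).1 hle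
  exact (hbelow k hlt).cons hk.2.1 fun _ ↦ hk

def IsStuck (G : SimpleGraph V) (C : Finset V) (β : V → V → ℕ∞) (t : V) (r : ℕ) (z : V) :
    Prop :=
  z ∈ C ∧ rho G C β z t = r ∧ ¬HasCorrPath G C β z t

lemma IsStuck.ne {r : ℕ} {z : V} (hz : IsStuck G C β t r z) : z ≠ t := by
  rintro rfl
  exact hz.2.2 (hasCorrPath_self z)

lemma IsStuck.not_hasCorrPath_of_adj {r : ℕ} {z k : V} (hz : IsStuck G C β t r z)
    (hzk : G.Adj z k) : ¬HasCorrPath G C β k t :=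
  fun h ↦ hz.2.2 (h.cons hzk fun hzC ↦ absurd hz.1 hzC)

/-- `u` is a forwarding choice of the honest neighbour `k`, which cannot reach `t`. -/
lemma IsStuck.of_adj_adj (hG : G.Connected) (hsep : ∀ x ∈ C, ∀ y ∈ C, ¬G.Adj x y) {r : ℕ}
    (hbelow : ∀ w, rho G C β w t < r → HasCorrPath G C β w t) {z k u : V}
    (hz : IsStuck G C β t r z) (hzk : G.Adj z k) (hku : G.Adj k u) (hu : rho G C β u t ≤ r) :
    IsStuck G C β t r u := by
  have hkC : k ∉ C := fun hk ↦ hsep z hz.1 k hk hzk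
  have hk := hz.not_hasCorrPath_of_adj hzk
  have hkt : k ≠ t := by
    rintro rfl
    exact hk (hasCorrPath_self k)
  obtain ⟨k₀, hk₀⟩ := exists_inForwardSet hG hkt
  have hr : r ≤ rho G C β k₀ t :=
    not_lt.1 fun h ↦ hk ((hbelow k₀ h).cons hk₀.2.1 fun _ ↦ hk₀)
  have hfwd : inForwardSet G (rho G C β) k t u :=
    ⟨hkt, hku, fun k' hk' ↦ hu.trans (hr.trans (hk₀.2.2 k' hk'))⟩
  have hu' : ¬HasCorrPath G C β u t := fun h ↦ hk (h.cons hku fun _ ↦ hfwd)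
  have huC : u ∈ C := by
    by_contra huC
    exact hu' (hasCorrPath_of_not_mem hG hbelow huC hu)
  exact ⟨huC, le_antisymm hu (not_lt.1 fun h ↦ hu' (hbelow u h)), hu'⟩

lemma hasCorrPath_of_forall_not_isStuck (hG : G.Connected) (hfin : ∀ v, rho G C β v t ≠ ⊤)
    (hstuck : ∀ r : ℕ, (∀ w, rho G C β w t < r → HasCorrPath G C β w t) →
      ∀ z, ¬IsStuck G C β t r z) (v : V) : HasCorrPath G C β v t := by
  suffices ∀ r : ℕ, ∀ v, rho G C β v t = r → HasCorrPath G C β v t from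
    this _ v (ENat.natCast_toNat (hfin v)).symm
  intro r
  induction r using Nat.strong_induction_on with
  | _ r ih =>
  have hbelow : ∀ w, rho G C β w t < r → HasCorrPath G C β w t := fun w hw ↦ by
    rw [← ENat.natCast_toNat (hfin w)] at hw
    exact ih _ (by exact_mod_cast hw) w (ENat.natCast_toNat (hfin w)).symm
  intro v hv
  by_cases hvC : v ∈ C
  · by_contra h
    exact hstuck r hbelow v ⟨hvC, hv, h⟩
  · exact hasCorrPath_of_not_mem hG hbelow hvC hv.le

end CorrespondingPaths

section Descent

variable [Fintype V] [DecidableEq V] {G : SimpleGraph V} {C : Finset V} {t : V}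

lemma rho_rhoStar_le_dist (hG : G.Connected) (v t : V) :
    rho G C (rhoStar G C) v t ≤ G.dist v t :=
  rho_le_dist hG (fun x _ ↦ rhoStar_le_dist hG x t) v

lemma IsStuck.lt_rhoPrime (hG : G.Connected) (hsep : ∀ x ∈ C, ∀ y ∈ C, ¬G.Adj x y)
    {r : ℕ} (hbelow : ∀ w, rho G C (rhoStar G C) w t < r → HasCorrPath G C (rhoStar G C) w t)
    {z : V}     (hz : IsStuck G C (rhoStar G C) t r z) : (r : ℕ∞) < rhoPrime G z t := by
  by_contra! hle
  rw [rhoPrime_eq_coe, Nat.cast_le] at hle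
  obtain ⟨u₁, hzu₁, hu₁⟩ := exists_adj_dist_lt hG hz.ne
  have hr₁ : r < G.dist u₁ t := by
    have hu₁C : u₁ ∉ C := fun h ↦ hsep z hz.1 u₁ h hzu₁
    have := not_le.1 fun h ↦
      hz.not_hasCorrPath_of_adj hzu₁ (hasCorrPath_of_not_mem hG hbelow hu₁C h)
    exact_mod_cast this.trans_le (rho_rhoStar_le_dist hG u₁ t)
  have hu₁t : u₁ ≠ t := by
    rintro rfl
    simp at hr₁
  obtain ⟨u₂, hu₁u₂, hu₂⟩ := exists_adj_dist_lt hG hu₁t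
  have hs₂ : IsStuck G C (rhoStar G C) t r u₂ := hz.of_adj_adj hG hsep hbelow hzu₁ hu₁u₂
    ((rho_rhoStar_le_dist hG u₂ t).trans (by exact_mod_cast (by omega : G.dist u₂ t ≤ r)))
  have hd₂ := hG.pos_dist_of_ne hs₂.ne
  rcases Nat.lt_or_ge r 2 with hr | hr
  · have hu₂t : G.Adj u₂ t := dist_eq_one_iff_adj.1 (by omega)
    exact hs₂.2.2 ((hasCorrPath_self t).cons hu₂t fun h ↦ absurd hs₂.1 h)
  · have h := rhoStar_le_rhoPrime (G := G) (C := C) hs₂.ne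
    rw [← rho_of_mem (G := G) (β := rhoStar G C) hs₂.1, hs₂.2.1, rhoPrime_eq_coe,
      Nat.cast_le] at h
    omega

/-- On a geodesic from `σ 0` to `σ 1`, the relay bound makes the vertex two steps out a stuck
colluder (`IsStuck.of_adj_adj`), and the bound on the chain forces it to be `σ 1`. -/
lemma IsStuck.tail (hG : G.Connected) (hsep : ∀ x ∈ C, ∀ y ∈ C, ¬G.Adj x y) {r : ℕ}
    (hbelow : ∀ w, rho G C (rhoStar G C) w t < r → HasCorrPath G C (rhoStar G C) w t)
    {σ : ℕ → V} {j : ℕ} (hσ : IsCollChain C σ (j + 2))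
    (hz : IsStuck G C (rhoStar G C) t r (σ 0)) (hcost : chainCost G t σ (j + 2) ≤ r) :
    IsStuck G C (rhoStar G C) t r (σ 1) ∧
      chainCost G t (fun b ↦ σ (b + 1)) (j + 1) ≤ r := by
  set c := chainCost G t (fun b ↦ σ (b + 1)) (j + 1)
  have hcost' : chainCost G t σ (j + 2) = G.dist (σ 0) (σ 1) - 2 + c :=
    chainCost_succ σ (by omega)
  have hσ₁ : σ 1 ∈ C := hσ.1 1 (by omega)
  obtain ⟨p, hp⟩ := hG.exists_walk_length_eq_dist (σ 0) (σ 1)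
  have hm : 2 ≤ p.length := hp ▸ two_le_dist_of_mem hG hsep hz.1 hσ₁
    fun h ↦ by cases hσ.2 0 (by omega) 1 (by omega) h
  obtain ⟨i, hi₂, him, hiC, hfirst, hrelay⟩ :=
    exists_rho_getVert_two_le (t := t) hsep hz.1 hσ₁ p (p.isPath_of_length_eq_dist hp) hm
  set w := p.getVert i with hwi
  have hdw : G.dist w (σ 1) ≤ p.length - i := (dist_le (p.drop i)).trans (p.drop_length i).le
  have hbound :
      rho G C (rhoStar G C) (p.getVert 2) t ≤ (i - 2 + (G.dist w (σ 1) - 2 + c) : ℕ) :=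
    hrelay.trans <| by
      rw [Nat.cast_add]
      exact add_le_add_right ((rhoStar_le_rhoPrime2 w t).trans
        (rhoPrime2_le_dist_sub_two_add_chainCost (hσ.drop 1) (by omega) hiC)) _
  have hs₂ : IsStuck G C (rhoStar G C) t r (p.getVert 2) :=
    hz.of_adj_adj hG hsep hbelow (by simpa using p.adj_getVert_succ (i := 0) (by omega))
      (p.adj_getVert_succ (by omega)) (hbound.trans (by exact_mod_cast (by omega)))
  have hi := hfirst hs₂.1
  have hr : r ≤ i - 2 + (G.dist w (σ 1) - 2 + c) := by exact_mod_cast hs₂.2.1 ▸ hbound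
  have hw : w = σ 1 := by
    by_contra hne
    have := two_le_dist_of_mem hG hsep hiC hσ₁ hne
    omega
  refine ⟨?_, by omega⟩
  rw [← hw, hwi, hi]
  exact hs₂

lemma IsStuck.not_chainCost_le (hG : G.Connected) (hsep : ∀ x ∈ C, ∀ y ∈ C, ¬G.Adj x y)
    {r : ℕ} (hbelow : ∀ w, rho G C (rhoStar G C) w t < r → HasCorrPath G C (rhoStar G C) w t)
    {σ : ℕ → V} {j : ℕ} (hz : IsStuck G C (rhoStar G C) t r (σ 0))
    (hσ : IsCollChain C σ (j + 1)) : r < chainCost G t σ (j + 1) := by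
  induction j generalizing σ with
  | zero =>
    have := hz.lt_rhoPrime hG hsep hbelow
    rw [rhoPrime_eq_coe, Nat.cast_lt] at this
    simpa [chainCost] using this
  | succ j ih =>
    by_contra! hcost
    obtain ⟨hs, hc⟩ := hz.tail hG hsep hbelow hσ hcost
    exact (ih hs (hσ.drop 1)).not_ge hc

lemma not_isStuck_rhoStar (hG : G.Connected) (hsep : ∀ x ∈ C, ∀ y ∈ C, ¬G.Adj x y)
    {r : ℕ} (hbelow : ∀ w, rho G C (rhoStar G C) w t < r → HasCorrPath G C (rhoStar G C) w t)
    (z : V) :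
    ¬IsStuck G C (rhoStar G C) t r z := by
  intro hz
  have hρ := hz.2.1
  rw [rho_of_mem hz.1, rhoStar, if_neg hz.ne] at hρ
  have h₂ : rhoPrime2 G C z t = r := by
    rcases min_cases (rhoPrime G z t) (rhoPrime2 G C z t) with ⟨h, -⟩ | ⟨h, -⟩
    · exact absurd (h ▸ hρ) (hz.lt_rhoPrime hG hsep hbelow).ne'
    · exact h ▸ hρ
  obtain ⟨σ, j, rfl, hj, hσ, hcost⟩ :=
    exists_chainCost_le_rhoPrime2 hG hsep (h₂ ▸ ENat.natCast_ne_top r)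
  obtain ⟨j, rfl⟩ : ∃ j', j = j' + 1 := ⟨j - 1, by omega⟩
  exact (hz.not_chainCost_le hG hsep hbelow hσ).not_ge (by exact_mod_cast h₂ ▸ hcost)

end Descent

theorem rhoStar_admissible_general [Fintype V] [DecidableEq V] (G : SimpleGraph V)
    (hG : G.Connected) (C : Finset V)
    (hsep : ∀ x ∈ C, ∀ y ∈ C, ¬ G.Adj x y) :
    Admissible G C (rhoStar G C) := fun s t _ ↦
  hasCorrPath_of_forall_not_isStuck hG
    (fun v ↦ ne_top_of_le_ne_top (ENat.natCast_ne_top _) (rho_rhoStar_le_dist hG v t))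
    (fun _ hbelow ↦ not_isStuck_rhoStar hG hsep hbelow) s

/-- If no two colluding agents are adjacent in `G`, then the
broadcast `β(x,t) = ρ*(x,t)` is admissible. -/
theorem rhoStar_admissible [Fintype V] [DecidableEq V] (G : SimpleGraph V)
    (hG : G.Connected) (hn : 2 ≤ Fintype.card V) (C : Finset V)
    (hsep : ∀ x ∈ C, ∀ y ∈ C, ¬ G.Adj x y) :
    Admissible G C (rhoStar G C) :=
  rhoStar_admissible_general G hG C hsep

end Intercept
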